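/- arXiv:1701.05487 — 2 statements merged into one kernel-verified Lean document; each statement's English description precedes it below -/
import Mathlib

section
/- Sample Size Bound: let (U, Σ) be a measurable space, D a probability measure on U, C* : U → {0,1} a measurable function, and H a finite nonempty set of measurable functions U → {0,1}. Let ε, δ ∈ (0,1) and let t ∈ ℕ satisfy t ≥ ln(|H|/δ)/ε. Then the probability, with respect to the t-fold product measure D^t, of the set of tuples (x₁,…,x_t) ∈ U^t such that every H ∈ H with H(x_i) = C*(x_i) for all i ∈ [t] satisfies D({x ∈ U : H(x) ≠ C*(x)}) < ε, is at least 1 − δ. -/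
/-!
A hypothesis whose error is at least `ε` agrees with the target on one draw with probability at
most `1 - ε ≤ exp (-ε)`, so it is consistent with `t` independent draws with probability at most
`exp (-ε t)`. By the union bound, some such hypothesis in `H` is consistent with the sample with
probability at most `|H| exp (-ε t)`, and `t ≥ ln (|H| / δ) / ε` makes this at most `δ`.
-/

open MeasureTheory Real

universe w

section Consistency

variable {U : Type*} [MeasurableSpace U] {D : Measure U}

lemma measure_pi_forall_mem {ι : Type*} [Fintype ι] [SigmaFinite D] (s : Set U) :
    Measure.pi (fun _ : ι => D) {x | ∀ i, x i ∈ s} = D s ^ Fintype.card ι := by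
  have hs : {x : ι → U | ∀ i, x i ∈ s} = Set.univ.pi fun _ => s := by ext; simp
  rw [hs, Measure.pi_pi, Finset.prod_const, Finset.card_univ]

variable [IsProbabilityMeasure D] {h c : U → Bool} {ε : ℝ}

lemma measure_agree_le_exp_neg (hh : Measurable h) (hc : Measurable c) (hε : 0 ≤ ε)
    (herr : ENNReal.ofReal ε ≤ D {u | h u ≠ c u}) :
    D {u | h u = c u} ≤ ENNReal.ofReal (exp (-ε)) :=
  calc D {u | h u = c u} = 1 - D {u | h u ≠ c u} := by
        rw [← prob_compl_eq_one_sub (s := {u | h u ≠ c u}) (measurableSet_eq_fun hh hc).compl]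
        congr; ext; simp
    _ ≤ 1 - ENNReal.ofReal ε := tsub_le_tsub_left herr 1
    _ = ENNReal.ofReal (1 - ε) := by rw [ENNReal.ofReal_sub _ hε, ENNReal.ofReal_one]
    _ ≤ ENNReal.ofReal (exp (-ε)) := ENNReal.ofReal_le_ofReal (one_sub_le_exp_neg ε)

lemma measure_pi_consistent_le_exp_neg {ι : Type*} [Fintype ι] (hh : Measurable h)
    (hc : Measurable c) (hε : 0 ≤ ε) (herr : ENNReal.ofReal ε ≤ D {u | h u ≠ c u}) :
    Measure.pi (fun _ : ι => D) {x | ∀ i, h (x i) = c (x i)} ≤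
      ENNReal.ofReal (exp (-(ε * Fintype.card ι))) :=
  calc Measure.pi (fun _ : ι => D) {x | ∀ i, h (x i) = c (x i)}
      = D {u | h u = c u} ^ Fintype.card ι := measure_pi_forall_mem {u | h u = c u}
    _ ≤ ENNReal.ofReal (exp (-ε)) ^ Fintype.card ι := by
        gcongr; exact measure_agree_le_exp_neg hh hc hε herr
    _ = ENNReal.ofReal (exp (-(ε * Fintype.card ι))) := by
        rw [← ENNReal.ofReal_pow (exp_pos _).le, ← exp_nat_mul]; ring_nf

lemma measure_pi_exists_consistent_of_le_err {ι : Type*} [Fintype ι] (hc : Measurable c)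
    (H : Finset (U → Bool)) (hH : ∀ h ∈ H, Measurable h) (hε : 0 ≤ ε) :
    Measure.pi (fun _ : ι => D)
        {x | ∃ h ∈ H, (∀ i, h (x i) = c (x i)) ∧ ENNReal.ofReal ε ≤ D {u | h u ≠ c u}} ≤
      H.card * ENNReal.ofReal (exp (-(ε * Fintype.card ι))) := by
  set bad := H.filter fun h => ENNReal.ofReal ε ≤ D {u | h u ≠ c u}
  have hunion : {x : ι → U | ∃ h ∈ H, (∀ i, h (x i) = c (x i)) ∧
      ENNReal.ofReal ε ≤ D {u | h u ≠ c u}} = ⋃ h ∈ bad, {x | ∀ i, h (x i) = c (x i)} := by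
    ext x
    simp only [bad, Finset.mem_filter, Set.mem_ofPred_eq, Set.mem_iUnion, exists_prop]
    exact ⟨fun ⟨h, hH, hcons, herr⟩ => ⟨h, ⟨hH, herr⟩, hcons⟩,
      fun ⟨h, ⟨hH, herr⟩, hcons⟩ => ⟨h, hH, hcons, herr⟩⟩
  calc _ = Measure.pi (fun _ : ι => D) (⋃ h ∈ bad, {x | ∀ i, h (x i) = c (x i)}) := by
        rw [hunion]
    _ ≤ ∑ h ∈ bad, Measure.pi (fun _ : ι => D) {x | ∀ i, h (x i) = c (x i)} :=
        measure_biUnion_finset_le _ _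
    _ ≤ bad.card • ENNReal.ofReal (exp (-(ε * Fintype.card ι))) := by
        refine Finset.sum_le_card_nsmul _ _ _ fun h hh => ?_
        obtain ⟨hH', herr⟩ := Finset.mem_filter.1 hh
        exact measure_pi_consistent_le_exp_neg (hH h hH') hc hε herr
    _ ≤ H.card * ENNReal.ofReal (exp (-(ε * Fintype.card ι))) := by
        rw [nsmul_eq_mul]; gcongr; exact Finset.filter_subset _ _

end Consistency

lemma mul_exp_neg_le_of_log_div_le {n δ ε t : ℝ} (hδ : 0 < δ) (hε : 0 < ε)
    (ht : log (n / δ) / ε ≤ t) : n * exp (-(ε * t)) ≤ δ := by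
  have hn : n / δ ≤ exp (ε * t) :=
    (le_exp_log _).trans (exp_le_exp.2 (by rwa [div_le_iff₀ hε, mul_comm] at ht))
  rw [exp_neg, ← div_eq_mul_inv, div_le_iff₀ (exp_pos _)]
  rwa [div_le_iff₀ hδ, mul_comm] at hn

lemma one_sub_measure_compl_le {α : Type*} [MeasurableSpace α] (μ : Measure α)
    [IsProbabilityMeasure μ] (s : Set α) : 1 - μ sᶜ ≤ μ s :=
  tsub_le_iff_right.2 (by simpa using measure_univ_le_add_compl (μ := μ) s)

theorem statement_11_general {U : Type w} [MeasurableSpace U]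
    (D : Measure U) [IsProbabilityMeasure D]
    (Cstar : U → Bool) (hC : Measurable Cstar)
    (H : Finset (U → Bool)) (hmeas : ∀ h ∈ H, Measurable h)
    (ε δ : ℝ) (hε : ε ∈ Set.Ioo (0 : ℝ) 1) (hδ : δ ∈ Set.Ioo (0 : ℝ) 1)
    (t : ℕ) (ht : Real.log ((H.card : ℝ) / δ) / ε ≤ (t : ℝ)) :
    ENNReal.ofReal (1 - δ) ≤
      Measure.pi (fun _ : Fin t => D)
        {x : Fin t → U | ∀ h ∈ H, (∀ i, h (x i) = Cstar (x i)) →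
          D {u | h u ≠ Cstar u} < ENNReal.ofReal ε} := by
  set good := {x : Fin t → U | ∀ h ∈ H, (∀ i, h (x i) = Cstar (x i)) →
    D {u | h u ≠ Cstar u} < ENNReal.ofReal ε}
  have hbad : Measure.pi (fun _ : Fin t => D) goodᶜ ≤ ENNReal.ofReal δ := by
    have hcompl : goodᶜ = {x | ∃ h ∈ H, (∀ i, h (x i) = Cstar (x i)) ∧
        ENNReal.ofReal ε ≤ D {u | h u ≠ Cstar u}} := by
      ext x; simp [good]
    rw [hcompl]
    refine (measure_pi_exists_consistent_of_le_err hC H hmeas hε.1.le).trans ?_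
    rw [Fintype.card_fin, ← ENNReal.ofReal_natCast, ← ENNReal.ofReal_mul (Nat.cast_nonneg _)]
    exact ENNReal.ofReal_le_ofReal (mul_exp_neg_le_of_log_div_le hδ.1 hε.1 ht)
  calc ENNReal.ofReal (1 - δ) = 1 - ENNReal.ofReal δ := by
        rw [ENNReal.ofReal_sub _ hδ.1.le, ENNReal.ofReal_one]
    _ ≤ 1 - Measure.pi (fun _ : Fin t => D) goodᶜ := tsub_le_tsub_left hbad 1
    _ ≤ Measure.pi (fun _ : Fin t => D) good := one_sub_measure_compl_le _ good

/-- Sample Size Bound, Lemma 5.1: if the finite hypothesis class `H` and the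
sample size `t` satisfy `t ≥ ln(|H|/δ)/ε`, then with probability at least `1 - δ` over an
i.i.d. sample of `t` instances from `D`, every hypothesis in `H` that is consistent with the
sample (labelled by the target `C*`) has generalisation error less than `ε`. -/
theorem statement_11 {U : Type w} [MeasurableSpace U]
    (D : Measure U) [IsProbabilityMeasure D]
    (Cstar : U → Bool) (hC : Measurable Cstar)
    (H : Finset (U → Bool)) (hne : H.Nonempty) (hmeas : ∀ h ∈ H, Measurable h)
    (ε δ : ℝ) (hε : ε ∈ Set.Ioo (0 : ℝ) 1) (hδ : δ ∈ Set.Ioo (0 : ℝ) 1)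
    (t : ℕ) (ht : Real.log ((H.card : ℝ) / δ) / ε ≤ (t : ℝ)) :
    ENNReal.ofReal (1 - δ) ≤
      Measure.pi (fun _ : Fin t => D)
        {x : Fin t → U | ∀ h ∈ H, (∀ i, h (x i) = Cstar (x i)) →
          D {u | h u ≠ Cstar u} < ENNReal.ofReal ε} :=
  statement_11_general D Cstar hC H hmeas ε δ hε hδ t ht
end

section
/- Uniform Convergence: let (U, Σ) be a measurable space, D a probability measure on U × {0,1} (with {0,1} discrete), and H a finite nonempty set of measurable functions U → {0,1}. Let ε, δ ∈ (0,1) and let t ∈ ℕ satisfy t ≥ ln(2|H|/δ)/(2ε²). Then the probability, with respect to the t-fold product measure D^t, of the set of training sequences T = ((u₁,c₁),…,(u_t,c_t)) ∈ (U × {0,1})^t such that |err_D(H) − err_T(H)| < ε holds for every H ∈ H, is at least 1 − δ; here err_D(H) := D({(u,c) : H(u) ≠ c}) and err_T(H) := (1/t)·|{i ∈ [t] : H(u_i) ≠ c_i}|. -/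
open MeasureTheory

universe w

open ProbabilityTheory Real

/-!
For a fixed hypothesis `h`, the number of training errors is a sum of `t` i.i.d. indicators
with mean `err_D(h)`. By Hoeffding's lemma each centred indicator is sub-Gaussian with
parameter `1/4`, so Hoeffding's inequality bounds each tail of `|err_D(h) - err_T(h)| ≥ ε`
by `exp(-2tε²)`. A union bound over the `|H|` hypotheses leaves a failure probability of at
most `2|H| exp(-2tε²)`, which is at most `δ` as soon as `t ≥ ln(2|H|/δ)/(2ε²)`.
-/

lemma mul_exp_neg_le_of_log_div_le_s12 {a b δ : ℝ} (ha : 0 ≤ a) (hδ : 0 < δ) (h : log (a / δ) ≤ b) :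
    a * exp (-b) ≤ δ := by
  rcases ha.eq_or_lt with rfl | ha
  · simpa using hδ.le
  have : a / δ ≤ exp b := (log_le_iff_le_exp (by positivity)).mp h
  rw [div_le_iff₀ hδ] at this
  rw [exp_neg, ← div_eq_mul_inv, div_le_iff₀ (exp_pos b)]
  linarith

lemma natCast_ncard_eq_sum_indicator {ι V : Type*} [Fintype ι] (ω : ι → V) (A : Set V) :
    ({i | ω i ∈ A}.ncard : ℝ) = ∑ i, A.indicator 1 (ω i) := by
  classical
  rw [Set.ncard_eq_toFinset_card', Set.toFinset_ofPred, Finset.natCast_card_filter]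
  simp [Set.indicator_apply]

section IIDSample

variable {ι V : Type*} [Fintype ι] [MeasurableSpace V] {D : Measure V} [IsProbabilityMeasure D]

lemma ProbabilityTheory.HasSubgaussianMGF.comp_eval_pi {X : V → ℝ} {c : NNReal}
    (hX : HasSubgaussianMGF X c D) (i : ι) :
    HasSubgaussianMGF (fun ω : ι → V => X (ω i)) c (Measure.pi fun _ => D) :=
  HasSubgaussianMGF.of_map (measurable_pi_apply i).aemeasurable
    (by rwa [(measurePreserving_eval _ i).map_eq])

lemma measureReal_sum_comp_eval_ge_le {X : V → ℝ} {c : NNReal} (hX : HasSubgaussianMGF X c D)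
    {ε : ℝ} (hε : 0 ≤ ε) :
    (Measure.pi fun _ : ι => D).real {ω | ε ≤ ∑ i, X (ω i)} ≤
      exp (-ε ^ 2 / (2 * Fintype.card ι * c)) := by
  have := HasSubgaussianMGF.measure_sum_ge_le_of_iIndepFun
    (iIndepFun_pi (ι := ι) (X := fun _ => X) (μ := fun _ => D) fun _ => hX.aemeasurable)
    (s := Finset.univ) (fun i _ => hX.comp_eval_pi i) hε
  simpa [mul_assoc] using this

lemma measureReal_abs_integral_sub_sum_div_ge_le {f : V → ℝ} (hf : Measurable f)
    (hf01 : ∀ x, f x ∈ Set.Icc (0 : ℝ) 1) (t : ℕ) {ε : ℝ} (hε : 0 ≤ ε) :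
    (Measure.pi fun _ : Fin t => D).real {ω | ε ≤ |∫ x, f x ∂D - (∑ i, f (ω i)) / t|} ≤
      2 * exp (-2 * t * ε ^ 2) := by
  set μ := Measure.pi fun _ : Fin t => D
  rcases t.eq_zero_or_pos with rfl | ht
  · calc μ.real _ ≤ 1 := measureReal_le_one
      _ ≤ 2 * exp (-2 * (0 : ℕ) * ε ^ 2) := by norm_num
  set X : V → ℝ := fun x => f x - ∫ x, f x ∂D
  have hX : HasSubgaussianMGF X ((‖(1 : ℝ) - 0‖₊ / 2) ^ 2) D :=
    hasSubgaussianMGF_of_mem_Icc hf.aemeasurable (ae_of_all _ hf01)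
  have htail : ∀ Y : V → ℝ, HasSubgaussianMGF Y ((‖(1 : ℝ) - 0‖₊ / 2) ^ 2) D →
      μ.real {ω | t * ε ≤ ∑ i, Y (ω i)} ≤ exp (-2 * t * ε ^ 2) := fun Y hY => by
    refine (measureReal_sum_comp_eval_ge_le hY (by positivity)).trans_eq ?_
    congr 1
    norm_num
    field_simp
    norm_num
  have hsum : ∀ ω : Fin t → V, ∑ i, X (ω i) = ∑ i, f (ω i) - t * ∫ x, f x ∂D := fun ω => by
    simp [X, Finset.sum_sub_distrib]
  have hsubset : {ω : Fin t → V | ε ≤ |∫ x, f x ∂D - (∑ i, f (ω i)) / t|} ⊆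
      {ω : Fin t → V | t * ε ≤ ∑ i, X (ω i)} ∪ {ω : Fin t → V | t * ε ≤ ∑ i, (-X) (ω i)} := by
    intro ω hω
    have htpos : (0 : ℝ) < t := by exact_mod_cast ht
    have hmean : ∫ x, f x ∂D - (∑ i, f (ω i)) / t = (t * ∫ x, f x ∂D - ∑ i, f (ω i)) / t := by
      field_simp
    rw [Set.mem_ofPred_eq, hmean, abs_div, abs_of_pos htpos, le_div_iff₀ htpos, mul_comm] at hω
    simp only [Set.mem_union, Set.mem_ofPred_eq, Pi.neg_apply, Finset.sum_neg_distrib, hsum]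
    rcases le_abs'.mp hω with h | h <;> [left; right] <;> linarith
  calc μ.real _ ≤ μ.real {ω | t * ε ≤ ∑ i, X (ω i)} + μ.real {ω | t * ε ≤ ∑ i, (-X) (ω i)} :=
        (measureReal_mono hsubset).trans (measureReal_union_le _ _)
    _ ≤ 2 * exp (-2 * t * ε ^ 2) := by linarith [htail X hX, htail (-X) hX.neg]

lemma measureReal_abs_measureReal_sub_ncard_div_ge_le {A : Set V} (hA : MeasurableSet A) (t : ℕ)
    {ε : ℝ} (hε : 0 ≤ ε) :
    (Measure.pi fun _ : Fin t => D).real {ω | ε ≤ |D.real A - {i | ω i ∈ A}.ncard / t|} ≤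
      2 * exp (-2 * t * ε ^ 2) := by
  have h := measureReal_abs_integral_sub_sum_div_ge_le (D := D) (f := A.indicator 1)
    (measurable_one.indicator hA) (fun x => by by_cases hx : x ∈ A <;> simp [hx]) t hε
  simpa only [integral_indicator_one hA, ← natCast_ncard_eq_sum_indicator] using h

end IIDSample

theorem statement_12_general {U : Type w} [MeasurableSpace U]
    (D : Measure (U × Bool)) [IsProbabilityMeasure D]
    (H : Finset (U → Bool)) (hmeas : ∀ h ∈ H, Measurable h)
    (ε δ : ℝ) (hε : ε ∈ Set.Ioo (0 : ℝ) 1) (hδ : δ ∈ Set.Ioo (0 : ℝ) 1)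
    (t : ℕ) (ht : Real.log (2 * (H.card : ℝ) / δ) / (2 * ε ^ 2) ≤ (t : ℝ)) :
    ENNReal.ofReal (1 - δ) ≤
      Measure.pi (fun _ : Fin t => D)
        {T : Fin t → U × Bool | ∀ h ∈ H,
          |(D {p | h p.1 ≠ p.2}).toReal -
            (Set.ncard {i : Fin t | h (T i).1 ≠ (T i).2} : ℝ) / (t : ℝ)| < ε} := by
  obtain ⟨hε0, -⟩ := hε
  set μ := Measure.pi fun _ : Fin t => D
  set Good := {T : Fin t → U × Bool | ∀ h ∈ H,
    |(D {p | h p.1 ≠ p.2}).toReal -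
      (Set.ncard {i : Fin t | h (T i).1 ≠ (T i).2} : ℝ) / (t : ℝ)| < ε}
  set Bad : (U → Bool) → Set (Fin t → U × Bool) := fun h =>
    {T | ε ≤ |(D {p | h p.1 ≠ p.2}).toReal -
      (Set.ncard {i : Fin t | h (T i).1 ≠ (T i).2} : ℝ) / (t : ℝ)|}
  have hbad : ∀ h ∈ H, μ.real (Bad h) ≤ 2 * exp (-2 * t * ε ^ 2) := fun h hh =>
    measureReal_abs_measureReal_sub_ncard_div_ge_le
      (measurableSet_eq_fun ((hmeas h hh).comp measurable_fst) measurable_snd).compl t hε0.le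
  have hGood_compl : Goodᶜ ⊆ ⋃ h ∈ H, Bad h := fun T hT => by
    simpa [Good, Bad] using hT
  have hunion : μ.real (⋃ h ∈ H, Bad h) ≤ δ := calc
    μ.real (⋃ h ∈ H, Bad h) ≤ ∑ h ∈ H, μ.real (Bad h) := measureReal_biUnion_finset_le _ _
    _ ≤ H.card • (2 * exp (-2 * t * ε ^ 2)) := Finset.sum_le_card_nsmul _ _ _ hbad
    _ = 2 * H.card * exp (-(2 * t * ε ^ 2)) := by rw [nsmul_eq_mul, neg_mul, neg_mul]; ring
    _ ≤ δ := mul_exp_neg_le_of_log_div_le_s12 (by positivity) hδ.1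
      ((div_le_iff₀ (by positivity)).mp ht |>.trans_eq (by ring))
  rw [ENNReal.ofReal_le_iff_le_toReal (measure_ne_top _ _)]
  calc 1 - δ ≤ μ.real (Good ∪ Goodᶜ) - μ.real Goodᶜ := by
        rw [Set.union_compl_self, probReal_univ]
        linarith [measureReal_mono hGood_compl (measure_ne_top μ _)]
    _ ≤ μ.real Good := by linarith [measureReal_union_le (μ := μ) Good Goodᶜ]

/-- Uniform Convergence, Lemma 5.8: if the finite hypothesis class `H` and the
sample size `t` satisfy `t ≥ ln(2|H|/δ)/(2ε²)`, then with probability at least `1 - δ` over an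
i.i.d. sample of `t` labelled examples from a distribution `D` on `U × {0,1}`, for every
`H ∈ H` the training error is within `ε` of the generalisation error. -/
theorem statement_12 {U : Type w} [MeasurableSpace U]
    (D : Measure (U × Bool)) [IsProbabilityMeasure D]
    (H : Finset (U → Bool)) (hne : H.Nonempty) (hmeas : ∀ h ∈ H, Measurable h)
    (ε δ : ℝ) (hε : ε ∈ Set.Ioo (0 : ℝ) 1) (hδ : δ ∈ Set.Ioo (0 : ℝ) 1)
    (t : ℕ) (ht : Real.log (2 * (H.card : ℝ) / δ) / (2 * ε ^ 2) ≤ (t : ℝ)) :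
    ENNReal.ofReal (1 - δ) ≤
      Measure.pi (fun _ : Fin t => D)
        {T : Fin t → U × Bool | ∀ h ∈ H,
          |(D {p | h p.1 ≠ p.2}).toReal -
            (Set.ncard {i : Fin t | h (T i).1 ≠ (T i).2} : ℝ) / (t : ℝ)| < ε} :=
  statement_12_general D H hmeas ε δ hε hδ t ht
end
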